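/- Let f(λ) = C_H (1 - cos λ) ∑_{j∈ℤ} |λ + 2jπ|^{-(2H+1)} with C_H = (1/(2π))Γ(2H+1)sin(πH), H ∈ (0,1). Then f(λ)/((C_H/2)λ^{1-2H}) → 1 as λ → 0⁺. -/

import Mathlib

open Filter Real

/-- Spectral density of fractional Gaussian noise. -/
noncomputable def fgnSpectral (H : ℝ) (lam : ℝ) : ℝ :=
  (1 / (2 * π) * Real.Gamma (2 * H + 1) * Real.sin (π * H)) * (1 - Real.cos lam) *
    ∑' j : ℤ, 1 / |lam + 2 * (j : ℝ) * π| ^ (2 * H + 1)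

/-!
Splitting off the term `j = 0` of the aliasing sum, for `0 < λ ≤ π`,
`f(λ) / ((C_H/2) λ^(1-2H)) = sinc(λ/2)² (1 + λ^(2H+1) T(λ))` with
`T(λ) = ∑_{j ≠ 0} |λ + 2jπ|^(-(2H+1))`. Since `|λ + 2jπ| ≥ |j|π` there, `T` is dominated by the
convergent series `π^(-(2H+1)) ∑ⱼ |j|^(-(2H+1))`, so `λ^(2H+1) T(λ) → 0` and the ratio tends to
`sinc(0)² = 1`.
-/

open Topology

lemma one_sub_cos_eq_sq_mul_sinc_sq (x : ℝ) : 2 * (1 - cos x) = x ^ 2 * sinc (x / 2) ^ 2 := by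
  rcases eq_or_ne x 0 with rfl | hx
  · simp
  have hcos : cos x = cos (2 * (x / 2)) := by ring_nf
  rw [sinc_of_ne_zero (by positivity), hcos, cos_two_mul, cos_sq']
  field_simp
  ring

lemma abs_int_mul_pi_le_abs_add_two_int_mul_pi {x : ℝ} (hx : |x| ≤ π) {j : ℤ} (hj : j ≠ 0) :
    |(j : ℝ)| * π ≤ |x + 2 * j * π| := by
  have hj1 : (1 : ℝ) ≤ |(j : ℝ)| := by exact_mod_cast Int.one_le_abs hj
  have hsub := abs_sub_abs_le_abs_sub (2 * j * π) (-x)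
  rw [abs_neg, sub_neg_eq_add, add_comm, abs_mul, abs_mul, abs_two, abs_of_pos pi_pos] at hsub
  nlinarith [pi_pos]

lemma one_div_abs_add_two_int_mul_pi_rpow_le {s : ℝ} (hs : 0 ≤ s) {x : ℝ} (hx : |x| ≤ π)
    {j : ℤ} (hj : j ≠ 0) :
    1 / |x + 2 * j * π| ^ s ≤ π ^ (-s) * |(j : ℝ)| ^ (-s) := by
  have hjπ : 0 < |(j : ℝ)| * π := by positivity
  calc 1 / |x + 2 * j * π| ^ s
      ≤ 1 / (|(j : ℝ)| * π) ^ s := by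
        gcongr
        exact abs_int_mul_pi_le_abs_add_two_int_mul_pi hx hj
    _ = π ^ (-s) * |(j : ℝ)| ^ (-s) := by
        rw [mul_rpow (abs_nonneg _) pi_pos.le, rpow_neg pi_pos.le, rpow_neg (abs_nonneg _),
          one_div, mul_inv, mul_comm]

noncomputable def aliasTail (s x : ℝ) : ℝ :=
  ∑' j : ℤ, if j = 0 then 0 else 1 / |x + 2 * j * π| ^ s

section aliasTail

variable {s x : ℝ}

lemma aliasTail_nonneg : 0 ≤ aliasTail s x :=
  tsum_nonneg fun j => by split_ifs <;> positivity

lemma summable_aliasTail_terms (hs : 1 < s) (hx : |x| ≤ π) :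
    Summable fun j : ℤ => if j = 0 then 0 else 1 / |x + 2 * j * π| ^ s := by
  refine ((summable_abs_int_rpow hs).mul_left (π ^ (-s))).of_nonneg_of_le
    (fun j => by split_ifs <;> positivity) fun j => ?_
  split_ifs with hj
  · positivity
  · exact one_div_abs_add_two_int_mul_pi_rpow_le (by linarith) hx hj

lemma aliasTail_le (hs : 1 < s) (hx : |x| ≤ π) :
    aliasTail s x ≤ π ^ (-s) * ∑' j : ℤ, |(j : ℝ)| ^ (-s) := by
  rw [← tsum_mul_left]
  refine (summable_aliasTail_terms hs hx).tsum_le_tsum (fun j => ?_)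
    ((summable_abs_int_rpow hs).mul_left _)
  split_ifs with hj
  · positivity
  · exact one_div_abs_add_two_int_mul_pi_rpow_le (by linarith) hx hj

lemma tsum_one_div_abs_add_two_int_mul_pi_rpow (hs : 1 < s) (hx₀ : 0 < x) (hx : x ≤ π) :
    ∑' j : ℤ, 1 / |x + 2 * j * π| ^ s = x ^ (-s) + aliasTail s x := by
  have hupdate : Summable (Function.update (fun j : ℤ => 1 / |x + 2 * j * π| ^ s) 0 0) := by
    convert summable_aliasTail_terms hs ((abs_of_pos hx₀).trans_le hx) using 2 with j
    exact Function.update_apply _ _ _ _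
  rw [Summable.tsum_eq_add_tsum_ite' 0 hupdate, aliasTail]
  simp [abs_of_pos hx₀, rpow_neg hx₀.le]

lemma tendsto_rpow_mul_aliasTail (hs : 1 < s) :
    Tendsto (fun x => x ^ s * aliasTail s x) (𝓝[>] 0) (𝓝 0) := by
  set M := π ^ (-s) * ∑' j : ℤ, |(j : ℝ)| ^ (-s)
  have hpow : Tendsto (fun x : ℝ => x ^ s * M) (𝓝[>] 0) (𝓝 0) := by
    have := ((continuousAt_rpow_const 0 s (Or.inr (by linarith))).tendsto.mul_const M)
    rw [zero_rpow (by linarith), zero_mul] at this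
    exact this.mono_left nhdsWithin_le_nhds
  refine squeeze_zero' ?_ ?_ hpow
  · filter_upwards [self_mem_nhdsWithin] with x hx
    exact mul_nonneg (rpow_nonneg (le_of_lt hx) s) aliasTail_nonneg
  · filter_upwards [Ioc_mem_nhdsGT pi_pos] with x hx
    exact mul_le_mul_of_nonneg_left (aliasTail_le hs ((abs_of_pos hx.1).trans_le hx.2))
      (rpow_nonneg hx.1.le s)

end aliasTail

noncomputable def fgnConst (H : ℝ) : ℝ := 1 / (2 * π) * Gamma (2 * H + 1) * sin (π * H)

lemma fgnConst_pos {H : ℝ} (hH : H ∈ Set.Ioo (0 : ℝ) 1) : 0 < fgnConst H := by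
  obtain ⟨hH0, hH1⟩ := hH
  have hΓ : 0 < Gamma (2 * H + 1) := Gamma_pos_of_pos (by linarith)
  have hsin : 0 < sin (π * H) := sin_pos_of_pos_of_lt_pi (by positivity) (by nlinarith [pi_pos])
  unfold fgnConst
  positivity

lemma fgnSpectral_div_eq {H x : ℝ} (hC : fgnConst H ≠ 0) (hH : 0 < H) (hx₀ : 0 < x)
    (hx : x ≤ π) :
    fgnSpectral H x / (fgnConst H / 2 * x ^ (1 - 2 * H)) =
      sinc (x / 2) ^ 2 * (1 + x ^ (2 * H + 1) * aliasTail (2 * H + 1) x) := by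
  have hsq : x ^ 2 = x ^ (1 - 2 * H) * x ^ (2 * H + 1) := by
    rw [← rpow_add hx₀, show 1 - 2 * H + (2 * H + 1) = (2 : ℝ) by ring, rpow_two]
  have hcos : 1 - cos x = x ^ 2 * sinc (x / 2) ^ 2 / 2 := by
    linarith [one_sub_cos_eq_sq_mul_sinc_sq x]
  have ha : 0 < x ^ (1 - 2 * H) := rpow_pos_of_pos hx₀ _
  have hb : 0 < x ^ (2 * H + 1) := rpow_pos_of_pos hx₀ _
  rw [div_eq_iff (by positivity), fgnSpectral, ← fgnConst,
    tsum_one_div_abs_add_two_int_mul_pi_rpow (by linarith) hx₀ hx, hcos, hsq, rpow_neg hx₀.le]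
  field_simp

theorem fgn_spectral_asymptotic (H : ℝ) (hH : H ∈ Set.Ioo (0 : ℝ) 1) :
    Tendsto (fun lam : ℝ =>
        fgnSpectral H lam
          / ((1 / (2 * π) * Real.Gamma (2 * H + 1) * Real.sin (π * H)) / 2
              * lam ^ (1 - 2 * H)))
      (nhdsWithin 0 (Set.Ioi 0)) (nhds 1) := by
  have hsinc : Tendsto (fun x : ℝ => sinc (x / 2) ^ 2) (𝓝[>] 0) (𝓝 1) := by
    have hcont : Continuous fun x : ℝ => sinc (x / 2) ^ 2 := by fun_prop
    simpa using (hcont.tendsto 0).mono_left nhdsWithin_le_nhds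
  have htail := tendsto_rpow_mul_aliasTail (s := 2 * H + 1) (by linarith [hH.1])
  have hlim := hsinc.mul (htail.const_add 1)
  rw [add_zero, mul_one] at hlim
  refine hlim.congr' ?_
  filter_upwards [Ioc_mem_nhdsGT pi_pos] with x hx
  exact (fgnSpectral_div_eq (fgnConst_pos hH).ne' hH.1 hx.1 hx.2).symm
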